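/- arXiv:0803.0968 — 8 statements merged into one kernel-verified Lean document; each statement's English description precedes it below -/
import Mathlib

section
/- Let R be an associative ring, let I be a one-sided (left or right) ideal of R, and let Z = Z(I) be the center of the subring I (the set of elements of I commuting with every element of I). Then there exists a two-sided ideal J of R such that J² = 0 and [Z, R] ⊆ J, i.e. zr − rz ∈ J for all z ∈ Z, r ∈ R. -/
/-- `I` is a right ideal of `R` (as an additive subgroup closed under right multiplication). -/
def IsRightIdealSG {R : Type*} [Ring R] (I : AddSubgroup R) : Prop :=
  ∀ i ∈ I, ∀ r : R, i * r ∈ I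

/-- `I` is a left ideal of `R`. -/
def IsLeftIdealSG {R : Type*} [Ring R] (I : AddSubgroup R) : Prop :=
  ∀ i ∈ I, ∀ r : R, r * i ∈ I

/-- `I` is a two-sided ideal of `R`. -/
def IsIdealSG {R : Type*} [Ring R] (I : AddSubgroup R) : Prop :=
  IsLeftIdealSG I ∧ IsRightIdealSG I

/-- Left-normed iterated commutator: `itComm s n = [[...[s 0, s 1],...], s n]`
(a left-normed commutator of `n + 1` elements). -/
def itComm {R : Type*} [Ring R] (s : ℕ → R) : ℕ → R
  | 0 => s 0
  | n + 1 => itComm s n * s (n + 1) - s (n + 1) * itComm s n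

/-- `S` is Lie nilpotent of class ≤ m : every left-normed commutator of `m + 1`
elements of `S` vanishes. -/
def LieNilpotentClassLe {R : Type*} [Ring R] (S : Set R) (m : ℕ) : Prop :=
  ∀ s : ℕ → R, (∀ n, s n ∈ S) → itComm s m = 0

/-- The Lie derived series of an additive subgroup `S` of a ring:
`D 0 = S`, `D (k+1)` = additive span of `[D k, D k]`. -/
def derSeries {R : Type*} [Ring R] (S : AddSubgroup R) : ℕ → AddSubgroup R
  | 0 => S
  | n + 1 => AddSubgroup.closure
      {x | ∃ a ∈ derSeries S n, ∃ b ∈ derSeries S n, x = a * b - b * a}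

/-- `R^(−)_n`: the additive subgroup generated by all left-normed commutators of
`n` elements of `R`. -/
def lcs (R : Type*) [Ring R] (n : ℕ) : AddSubgroup R :=
  AddSubgroup.closure {x | ∃ s : ℕ → R, x = itComm s (n - 1)}

/-- `R_n = R^(−)_n + R^(−)_n · R`, a two-sided ideal of `R`. -/
def Rn (R : Type*) [Ring R] (n : ℕ) : AddSubgroup R :=
  lcs R n ⊔ AddSubgroup.closure {x | ∃ c ∈ lcs R n, ∃ r : R, x = c * r}

/-- The additive span of `k`-fold products of elements of `S`. -/
def spanPow {R : Type*} [Ring R] (S : Set R) (k : ℕ) : AddSubgroup R :=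
  AddSubgroup.closure {x | ∃ l : List R, l.length = k ∧ (∀ a ∈ l, a ∈ S) ∧ x = l.prod}

/-- `J` is nilpotent: all `k`-fold products of its elements vanish for some `k > 0`. -/
def IsNilpotentSG {R : Type*} [Ring R] (J : AddSubgroup R) : Prop :=
  ∃ k : ℕ, 0 < k ∧ ∀ l : List R, l.length = k → (∀ a ∈ l, a ∈ J) → l.prod = 0

/-- `R` is semiprime: it has no nonzero nilpotent two-sided ideals. -/
def IsSemiprimeRing (R : Type*) [Ring R] : Prop :=
  ∀ J : AddSubgroup R, IsIdealSG J → IsNilpotentSG J → J = ⊥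

/-
If `I` is a left ideal and `z ∈ Z(I)`, then `[z, x] a = z (x a) - x z a = x a z - x a z = 0` for
every `a ∈ I`, since `x a ∈ I`. A product `[z, x] w [z', y]` expands into terms `[z, x] a b` with
`a ∈ I`, so it vanishes; symmetrically for right ideals, where `I` annihilates `[Z(I), R]` from
the left. Hence the two-sided ideal generated by `[Z(I), R]` has square zero.
-/

section

variable {R : Type*} [Ring R] {I : AddSubgroup R} {z : R}

lemma commutator_mul_eq_zero_of_isLeftIdealSG (hI : IsLeftIdealSG I)
    (hz : ∀ i ∈ I, z * i = i * z) (x : R) {a : R} (ha : a ∈ I) : (z * x - x * z) * a = 0 := by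
  rw [sub_mul, mul_assoc, hz _ (hI a ha x), mul_assoc x, mul_assoc x, hz a ha, sub_self]

lemma mul_commutator_eq_zero_of_isRightIdealSG (hI : IsRightIdealSG I)
    (hz : ∀ i ∈ I, z * i = i * z) (x : R) {a : R} (ha : a ∈ I) : a * (z * x - x * z) = 0 := by
  rw [mul_sub, ← mul_assoc, ← hz a ha, ← mul_assoc, ← hz _ (hI a ha x), mul_assoc, sub_self]

lemma commutator_mul_mul_commutator_eq_zero (hI : IsLeftIdealSG I ∨ IsRightIdealSG I)
    {z' : R} (hzI : z ∈ I) (hz'I : z' ∈ I)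
    (hz : ∀ i ∈ I, z * i = i * z) (hz' : ∀ i ∈ I, z' * i = i * z') (x w y : R) :
    (z * x - x * z) * w * (z' * y - y * z') = 0 := by
  rcases hI with hL | hR
  · have hwz' : w * z' ∈ I := hL z' hz'I w
    have hwyz' : w * y * z' ∈ I := hL z' hz'I (w * y)
    calc (z * x - x * z) * w * (z' * y - y * z')
        = (z * x - x * z) * (w * z') * y - (z * x - x * z) * (w * y * z') := by noncomm_ring
      _ = 0 := by
        rw [commutator_mul_eq_zero_of_isLeftIdealSG hL hz x hwz',
          commutator_mul_eq_zero_of_isLeftIdealSG hL hz x hwyz', zero_mul, sub_zero]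
  · have hzxw : z * x * w ∈ I := mul_assoc z x w ▸ hR z hzI (x * w)
    have hzw : z * w ∈ I := hR z hzI w
    calc (z * x - x * z) * w * (z' * y - y * z')
        = z * x * w * (z' * y - y * z') - x * (z * w * (z' * y - y * z')) := by noncomm_ring
      _ = 0 := by
        rw [mul_commutator_eq_zero_of_isRightIdealSG hR hz' y hzxw,
          mul_commutator_eq_zero_of_isRightIdealSG hR hz' y hzw, mul_zero, sub_zero]

end

namespace TwoSidedIdeal

variable {R : Type*} [Ring R]

lemma mul_mul_eq_zero_of_mem_span {s : Set R} (hs : ∀ a ∈ s, ∀ w, ∀ b ∈ s, a * w * b = 0)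
    {x y : R} (hx : x ∈ span s) (hy : y ∈ span s) (w : R) : x * w * y = 0 := by
  have hleft : ∀ a ∈ s, ∀ w, a * w * y = 0 := by
    intro a ha
    induction hy using span_induction with
    | mem b hb => exact fun w ↦ hs a ha w b hb
    | zero => simp
    | add b c _ _ hb hc => simp [mul_add, hb, hc]
    | neg b _ hb => simp [hb]
    | left_absorb c b _ hb => exact fun w ↦ by rw [← mul_assoc, mul_assoc a, hb]
    | right_absorb c b _ hb => exact fun w ↦ by rw [← mul_assoc, hb, zero_mul]
  induction hx using span_induction generalizing w with
  | mem a ha => exact hleft a ha w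
  | zero => simp
  | add a b _ _ ha hb => simp [add_mul, ha, hb]
  | neg a _ ha => simp [ha]
  | left_absorb c a _ ha => rw [mul_assoc c, mul_assoc c, ha, mul_zero]
  | right_absorb c a _ ha => rw [mul_assoc a, ha]

lemma mul_eq_zero_of_mem_span {s : Set R} (hs : ∀ a ∈ s, ∀ w, ∀ b ∈ s, a * w * b = 0)
    {x y : R} (hx : x ∈ span s) (hy : y ∈ span s) : x * y = 0 := by
  simpa using mul_mul_eq_zero_of_mem_span hs hx hy 1

lemma isIdealSG_ofClass (J : TwoSidedIdeal R) : IsIdealSG (AddSubgroup.ofClass J) :=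
  ⟨fun a ha r ↦ J.mul_mem_left r a ha, fun a ha r ↦ J.mul_mem_right a r ha⟩

end TwoSidedIdeal

/-- A one-sided ideal `I` of an associative ring `R` admits a two-sided
ideal `J` of `R` with `J² = 0` and `[Z(I), R] ⊆ J`. -/
theorem lemma_center {R : Type*} [Ring R] (I : AddSubgroup R)
    (hI : IsLeftIdealSG I ∨ IsRightIdealSG I) :
    ∃ J : AddSubgroup R, IsIdealSG J ∧ (∀ a ∈ J, ∀ b ∈ J, a * b = 0) ∧
      ∀ z ∈ I, (∀ i ∈ I, z * i = i * z) → ∀ r : R, z * r - r * z ∈ J := by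
  set commutators : Set R :=
    {c | ∃ z ∈ I, (∀ i ∈ I, z * i = i * z) ∧ ∃ r, c = z * r - r * z}
  have hprod : ∀ a ∈ commutators, ∀ w, ∀ b ∈ commutators, a * w * b = 0 := by
    rintro _ ⟨z, hzI, hz, x, rfl⟩ w _ ⟨z', hz'I, hz', y, rfl⟩
    exact commutator_mul_mul_commutator_eq_zero hI hzI hz'I hz hz' x w y
  exact ⟨AddSubgroup.ofClass (TwoSidedIdeal.span commutators),
    TwoSidedIdeal.isIdealSG_ofClass _,
    fun a ha b hb ↦ TwoSidedIdeal.mul_eq_zero_of_mem_span hprod ha hb,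
    fun z hzI hz r ↦ TwoSidedIdeal.subset_span ⟨z, hzI, hz, r, rfl⟩⟩
end

section
/- Let R be an associative ring and let I be a one-sided (left or right) ideal of R that is commutative as a ring. Then there exists a two-sided ideal T of R with T² = 0 such that the image of I in R/T lies in the center of R/T; consequently I + T is a two-sided ideal of R containing I that is Lie solvable of derived length at most 2. -/
/-!
Let `T` be the two-sided ideal generated by the commutators `[i, r]`, `i ∈ I`, `r ∈ R`. If `I` is a
right ideal, then for `i, j ∈ I` commutativity applied to `jr ∈ I` gives `j r i = i j r = j i r`,
so `I · [I, R] = 0`; as the right annihilator of a right ideal is a two-sided ideal, `I · T = 0`.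
Then `[i, r] t = i (r t) - r (i t) = 0` for `t ∈ T`, and as `T` is an ideal this gives `T · T = 0`.
Left ideals are handled symmetrically. Modulo `T` the image of `I` is central, so `I + T` is an
ideal whose commutators lie in `T`, and commutators of elements of `T` vanish.
-/

section

variable {R : Type*} [Ring R]

theorem derSeries_succ_le_iff {S T : AddSubgroup R} {n : ℕ} :
    derSeries S (n + 1) ≤ T ↔
      ∀ a ∈ derSeries S n, ∀ b ∈ derSeries S n, a * b - b * a ∈ T := by
  rw [derSeries, AddSubgroup.closure_le]
  exact ⟨fun h a ha b hb => h ⟨a, ha, b, hb, rfl⟩,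
    by rintro h _ ⟨a, ha, b, hb, rfl⟩; exact h a ha b hb⟩

theorem derSeries_two_eq_bot_of_commutator_mem {S T : AddSubgroup R}
    (hT : ∀ a ∈ T, ∀ b ∈ T, a * b = 0) (hST : ∀ a ∈ S, ∀ b ∈ S, a * b - b * a ∈ T) :
    derSeries S 2 = ⊥ := by
  have hS₁ : derSeries S 1 ≤ T := derSeries_succ_le_iff.2 hST
  refine le_bot_iff.1 (derSeries_succ_le_iff.2 fun a ha b hb => ?_)
  rw [hT a (hS₁ ha) b (hS₁ hb), hT b (hS₁ hb) a (hS₁ ha), sub_zero]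
  exact zero_mem _

theorem isIdealSG_sup_of_commutator_mem {I T : AddSubgroup R}
    (hI : IsLeftIdealSG I ∨ IsRightIdealSG I) (hT : IsIdealSG T)
    (hIT : ∀ i ∈ I, ∀ r : R, i * r - r * i ∈ T) : IsIdealSG (I ⊔ T) := by
  have hmul : ∀ i ∈ I, ∀ r : R, r * i ∈ I ⊔ T ∧ i * r ∈ I ⊔ T := by
    intro i hi r
    have hc : i * r - r * i ∈ I ⊔ T := AddSubgroup.mem_sup_right (hIT i hi r)
    rcases hI with hL | hR
    · have h : r * i ∈ I ⊔ T := AddSubgroup.mem_sup_left (hL i hi r)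
      exact ⟨h, by simpa using add_mem h hc⟩
    · have h : i * r ∈ I ⊔ T := AddSubgroup.mem_sup_left (hR i hi r)
      exact ⟨by simpa using sub_mem h hc, h⟩
  constructor
  · intro x hx r
    obtain ⟨i, hi, t, ht, rfl⟩ := AddSubgroup.mem_sup.1 hx
    rw [mul_add]
    exact add_mem (hmul i hi r).1 (AddSubgroup.mem_sup_right (hT.1 t ht r))
  · intro x hx r
    obtain ⟨i, hi, t, ht, rfl⟩ := AddSubgroup.mem_sup.1 hx
    rw [add_mul]
    exact add_mem (hmul i hi r).2 (AddSubgroup.mem_sup_right (hT.2 t ht r))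

theorem commutator_mem_of_mem_sup {I T : AddSubgroup R}
    (hcomm : ∀ a ∈ I, ∀ b ∈ I, a * b = b * a) (hT : IsIdealSG T) :
    ∀ a ∈ I ⊔ T, ∀ b ∈ I ⊔ T, a * b - b * a ∈ T := by
  intro a ha b hb
  obtain ⟨i, hi, t, ht, rfl⟩ := AddSubgroup.mem_sup.1 ha
  obtain ⟨j, hj, u, hu, rfl⟩ := AddSubgroup.mem_sup.1 hb
  have hexpand : (i + t) * (j + u) - (j + u) * (i + t)
      = (i * j - j * i) + ((i * u - u * i) + (t * j - j * t) + (t * u - u * t)) := by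
    noncomm_ring
  rw [hexpand, hcomm i hi j hj, sub_self, zero_add]
  exact add_mem (add_mem (sub_mem (hT.1 u hu i) (hT.2 u hu i))
    (sub_mem (hT.2 t ht j) (hT.1 t ht j))) (sub_mem (hT.2 t ht u) (hT.1 t ht u))

namespace TwoSidedIdeal

def leftAnnihilator (A : Set R) (hA : ∀ a ∈ A, ∀ r : R, r * a ∈ A) : TwoSidedIdeal R :=
  mk' {x | ∀ a ∈ A, x * a = 0} (fun a _ => zero_mul a)
    (fun hx hy a ha => by rw [add_mul, hx a ha, hy a ha, add_zero])
    (fun hx a ha => by rw [neg_mul, hx a ha, neg_zero])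
    (fun {x _} hy a ha => by rw [mul_assoc, hy a ha, mul_zero])
    (fun {_ y} hx a ha => by rw [mul_assoc, hx _ (hA a ha y)])

theorem mem_leftAnnihilator {A : Set R} {hA : ∀ a ∈ A, ∀ r : R, r * a ∈ A} {x : R} :
    x ∈ leftAnnihilator A hA ↔ ∀ a ∈ A, x * a = 0 :=
  mem_mk' ..

def rightAnnihilator (A : Set R) (hA : ∀ a ∈ A, ∀ r : R, a * r ∈ A) : TwoSidedIdeal R :=
  mk' {x | ∀ a ∈ A, a * x = 0} (fun a _ => mul_zero a)
    (fun hx hy a ha => by rw [mul_add, hx a ha, hy a ha, add_zero])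
    (fun hx a ha => by rw [mul_neg, hx a ha, neg_zero])
    (fun {x _} hy a ha => by rw [← mul_assoc, hy _ (hA a ha x)])
    (fun {_ y} hx a ha => by rw [← mul_assoc, hx a ha, zero_mul])

theorem mem_rightAnnihilator {A : Set R} {hA : ∀ a ∈ A, ∀ r : R, a * r ∈ A} {x : R} :
    x ∈ rightAnnihilator A hA ↔ ∀ a ∈ A, a * x = 0 :=
  mem_mk' ..

end TwoSidedIdeal

open TwoSidedIdeal

def commutatorIdeal (I : Set R) : TwoSidedIdeal R :=
  span {x | ∃ i ∈ I, ∃ r : R, x = i * r - r * i}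

theorem commutator_mem_commutatorIdeal {I : Set R} {i : R} (hi : i ∈ I) (r : R) :
    i * r - r * i ∈ commutatorIdeal I :=
  subset_span ⟨i, hi, r, rfl⟩

theorem commutatorIdeal_le_iff {I : Set R} {J : TwoSidedIdeal R} :
    commutatorIdeal I ≤ J ↔ ∀ i ∈ I, ∀ r : R, i * r - r * i ∈ J := by
  rw [commutatorIdeal, span_le]
  exact ⟨fun h i hi r => h ⟨i, hi, r, rfl⟩, by rintro h _ ⟨i, hi, r, rfl⟩; exact h i hi r⟩

section Commutative

variable {I : AddSubgroup R} (hcomm : ∀ a ∈ I, ∀ b ∈ I, a * b = b * a)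
include hcomm

theorem mul_commutator_eq_zero (hI : IsRightIdealSG I) {i j : R} (hi : i ∈ I) (hj : j ∈ I)
    (r : R) : j * (i * r - r * i) = 0 := by
  have h : j * r * i = j * i * r := by
    rw [hcomm _ (hI j hj r) i hi, ← mul_assoc, hcomm i hi j hj]
  rw [mul_sub, ← mul_assoc, ← mul_assoc, h, sub_self]

theorem commutator_mul_eq_zero (hI : IsLeftIdealSG I) {i j : R} (hi : i ∈ I) (hj : j ∈ I)
    (r : R) : (i * r - r * i) * j = 0 := by
  have h : i * r * j = r * i * j := by
    rw [mul_assoc, hcomm i hi _ (hI j hj r), mul_assoc, hcomm j hj i hi, ← mul_assoc]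
  rw [sub_mul, h, sub_self]

theorem commutatorIdeal_mul_eq_zero_of_isRightIdealSG (hI : IsRightIdealSG I) :
    ∀ a ∈ commutatorIdeal (I : Set R), ∀ b ∈ commutatorIdeal (I : Set R), a * b = 0 := by
  set T := commutatorIdeal (I : Set R)
  have hIT : T ≤ rightAnnihilator (I : Set R) hI := commutatorIdeal_le_iff.2 fun i hi r =>
    mem_rightAnnihilator.2 fun j hj => mul_commutator_eq_zero hcomm hI hi hj r
  have hTT : T ≤ leftAnnihilator T (fun t ht r => T.mul_mem_left r t ht) :=
    commutatorIdeal_le_iff.2 fun i hi r => mem_leftAnnihilator.2 fun t ht => by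
      have hrt := mem_rightAnnihilator.1 (hIT (T.mul_mem_left r t ht)) i hi
      have hit := mem_rightAnnihilator.1 (hIT ht) i hi
      calc (i * r - r * i) * t = i * (r * t) - r * (i * t) := by noncomm_ring
        _ = 0 := by rw [hrt, hit, mul_zero, sub_zero]
  exact fun a ha b hb => mem_leftAnnihilator.1 (hTT ha) b hb

theorem commutatorIdeal_mul_eq_zero_of_isLeftIdealSG (hI : IsLeftIdealSG I) :
    ∀ a ∈ commutatorIdeal (I : Set R), ∀ b ∈ commutatorIdeal (I : Set R), a * b = 0 := by
  set T := commutatorIdeal (I : Set R)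
  have hTI : T ≤ leftAnnihilator (I : Set R) hI := commutatorIdeal_le_iff.2 fun i hi r =>
    mem_leftAnnihilator.2 fun j hj => commutator_mul_eq_zero hcomm hI hi hj r
  have hTT : T ≤ rightAnnihilator T (fun t ht r => T.mul_mem_right t r ht) :=
    commutatorIdeal_le_iff.2 fun i hi r => mem_rightAnnihilator.2 fun t ht => by
      have hti := mem_leftAnnihilator.1 (hTI ht) i hi
      have htr := mem_leftAnnihilator.1 (hTI (T.mul_mem_right t r ht)) i hi
      calc t * (i * r - r * i) = t * i * r - t * r * i := by noncomm_ring
        _ = 0 := by rw [hti, htr, zero_mul, sub_zero]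
  exact fun a ha b hb => mem_rightAnnihilator.1 (hTT hb) a ha

end Commutative

theorem isIdealSG_ofClass (T : TwoSidedIdeal R) : IsIdealSG (AddSubgroup.ofClass T) :=
  ⟨fun t ht r => T.mul_mem_left r t ht, fun t ht r => T.mul_mem_right t r ht⟩

end

/-- A commutative one-sided ideal `I` of `R` admits a two-sided ideal `T`
with `T² = 0` whose quotient sends `I` into the center, and `I + T` is a two-sided ideal
of `R` containing `I` which is Lie solvable of derived length at most `2`. -/
theorem commutative_ideal_in_lie_solvable_ideal {R : Type*} [Ring R] (I : AddSubgroup R)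
    (hI : IsLeftIdealSG I ∨ IsRightIdealSG I)
    (hcomm : ∀ a ∈ I, ∀ b ∈ I, a * b = b * a) :
    ∃ T : AddSubgroup R, IsIdealSG T ∧ (∀ a ∈ T, ∀ b ∈ T, a * b = 0) ∧
      (∀ i ∈ I, ∀ r : R, i * r - r * i ∈ T) ∧
      IsIdealSG (I ⊔ T) ∧ derSeries (I ⊔ T) 2 = ⊥ := by
  let T := AddSubgroup.ofClass (commutatorIdeal (I : Set R))
  have hT : IsIdealSG T := isIdealSG_ofClass _
  have hT₂ : ∀ a ∈ T, ∀ b ∈ T, a * b = 0 :=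
    hI.elim (commutatorIdeal_mul_eq_zero_of_isLeftIdealSG hcomm)
      (commutatorIdeal_mul_eq_zero_of_isRightIdealSG hcomm)
  have hIT : ∀ i ∈ I, ∀ r : R, i * r - r * i ∈ T :=
    fun i hi r => commutator_mem_commutatorIdeal hi r
  exact ⟨T, hT, hT₂, hIT, isIdealSG_sup_of_commutator_mem hI hT hIT,
    derSeries_two_eq_bot_of_commutator_mem hT₂ (commutator_mem_of_mem_sup hcomm hT)⟩
end

section
/- Let R be an associative ring, let A be a subring of R in which every left-normed commutator of m elements of A vanishes (i.e. A is Lie nilpotent of class < m), and let Z₀ be a subring of A with Z₀ ⊆ Z(R) (every element of Z₀ is central in R) and Z₀R ⊆ A. Then Z₀^m · R_m = 0, where Z₀^m is the additive span of m-fold products of elements of Z₀. -/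
/-!
Multiplying the entries of a left-normed commutator by central elements pulls their product out
in front: `[[z₀ s₀, z₁ s₁], …, zₖ sₖ] = z₀ z₁ ⋯ zₖ · [[s₀, s₁], …, sₖ]`. If `z₀, …, zₖ ∈ Z₀`, the
left-hand side is a commutator of `k + 1` elements of `Z₀R ⊆ A`, hence zero. So each generator of
`Z₀^m` kills each generator of `R^(−)_m`, and the right annihilator of an element is a right ideal.
-/

section

variable {R : Type*} [Ring R]

theorem itComm_mul_central (z s : ℕ → R) (hz : ∀ n, z n ∈ Set.center R) (k : ℕ) :
    itComm (fun n => z n * s n) k = ((List.range (k + 1)).map z).prod * itComm s k := by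
  induction k with
  | zero => simp [itComm]
  | succ k ih =>
    rw [itComm, itComm, ih, List.range_succ (n := k + 1), List.map_append, List.prod_append,
      List.map_singleton, List.prod_singleton]
    set P := ((List.range (k + 1)).map z).prod
    have hP : ∀ r, r * P = P * r := Semigroup.mem_center_iff.1 <|
      (Submonoid.center R).list_prod_mem fun _ h => by
        obtain ⟨n, -, rfl⟩ := List.mem_map.1 h; exact hz n
    have hzk : ∀ r, r * z (k + 1) = z (k + 1) * r := Semigroup.mem_center_iff.1 (hz (k + 1))
    have hleft : P * itComm s k * (z (k + 1) * s (k + 1)) =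
        P * z (k + 1) * (itComm s k * s (k + 1)) := by
      rw [mul_assoc, ← mul_assoc (itComm s k), hzk]; simp only [mul_assoc]
    have hright : z (k + 1) * s (k + 1) * (P * itComm s k) =
        P * z (k + 1) * (s (k + 1) * itComm s k) := by
      simp only [← mul_assoc]; rw [mul_assoc (z _), hP, ← mul_assoc, hP]
    rw [hleft, hright, mul_sub]

theorem list_prod_mul_itComm_eq_zero {A : Set R} {k : ℕ}
    (hA : ∀ s : ℕ → R, (∀ n, s n ∈ A) → itComm s k = 0) {l : List R} (hl : l.length = k + 1)
    (hcent : ∀ a ∈ l, a ∈ Set.center R) (hmul : ∀ a ∈ l, ∀ r : R, a * r ∈ A) (s : ℕ → R) :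
    l.prod * itComm s k = 0 := by
  obtain ⟨d, hd⟩ : ∃ d, d ∈ l := List.exists_mem_of_length_pos (by omega)
  have hmem : ∀ n, l.getD n d ∈ l := fun n => by
    rcases lt_or_ge n l.length with h | h
    · rw [List.getD_eq_getElem _ _ h]; exact List.getElem_mem h
    · rwa [List.getD_eq_default _ _ h]
  have hprod : ((List.range (k + 1)).map (l.getD · d)).prod = l.prod := by
    congr 1
    apply List.ext_getElem (by simp [hl])
    intro n _ h
    simp [h]
  rw [← hprod, ← itComm_mul_central _ _ fun n => hcent _ (hmem n)]
  exact hA _ fun n => hmul _ (hmem n) (s n)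

theorem mul_eq_zero_of_mem_closure {S T : Set R} (h : ∀ x ∈ S, ∀ y ∈ T, x * y = 0)
    {x y : R} (hx : x ∈ AddSubgroup.closure S) (hy : y ∈ AddSubgroup.closure T) :
    x * y = 0 := by
  have hS : ∀ y' ∈ T, AddSubgroup.closure S ≤ (AddMonoidHom.mulRight y').ker := fun y' hy' =>
    (AddSubgroup.closure_le _).2 fun x' hx' => h x' hx' y' hy'
  have hT : AddSubgroup.closure T ≤ (AddMonoidHom.mulLeft x).ker :=
    (AddSubgroup.closure_le _).2 fun y' hy' => hS y' hy' hx
  exact hT hy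

theorem isRightIdealSG_ker_mulLeft (x : R) : IsRightIdealSG (AddMonoidHom.mulLeft x).ker :=
  fun y (hy : x * y = 0) r => show x * (y * r) = 0 by rw [← mul_assoc, hy, zero_mul]

theorem Rn_le_of_lcs_le {K : AddSubgroup R} (hK : IsRightIdealSG K) {n : ℕ} (h : lcs R n ≤ K) :
    Rn R n ≤ K :=
  sup_le h <| (AddSubgroup.closure_le _).2 fun _ ⟨c, hc, r, hx⟩ => hx ▸ hK c (h hc) r

end

theorem central_subring_power_annihilates_general {R : Type*} [Ring R] (m : ℕ) (hm : 1 ≤ m)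
    (A Z₀ : AddSubgroup R)
    (hA : ∀ s : ℕ → R, (∀ n, s n ∈ A) → itComm s (m - 1) = 0)
    (hZcent : ∀ z ∈ Z₀, ∀ r : R, z * r = r * z)
    (hZR : ∀ z ∈ Z₀, ∀ r : R, z * r ∈ A) :
    ∀ x ∈ spanPow (Z₀ : Set R) m, ∀ y ∈ Rn R m, x * y = 0 := by
  intro x hx
  have hlcs : lcs R m ≤ (AddMonoidHom.mulLeft x).ker := fun y hy => by
    refine mul_eq_zero_of_mem_closure ?_ hx hy
    rintro _ ⟨l, hl, hlZ, rfl⟩ _ ⟨s, rfl⟩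
    exact list_prod_mul_itComm_eq_zero (A := A) hA (by omega)
      (fun a ha => Semigroup.mem_center_iff.2 fun r => (hZcent a (hlZ a ha) r).symm)
      (fun a ha => hZR a (hlZ a ha)) s
  exact fun y hy => Rn_le_of_lcs_le (isRightIdealSG_ker_mulLeft x) hlcs hy

/-- **Lemma 2.** If `A` is a subring of `R` of Lie nilpotency class `< m` and
`Z₀` is a subring of `A` with `Z₀ ⊆ Z(R)` and `Z₀R ⊆ A`, then `Z₀^m · R_m = 0`. -/
theorem central_subring_power_annihilates {R : Type*} [Ring R] (m : ℕ) (hm : 1 ≤ m)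
    (A Z₀ : AddSubgroup R)
    (hAmul : ∀ a ∈ A, ∀ b ∈ A, a * b ∈ A)
    (hA : ∀ s : ℕ → R, (∀ n, s n ∈ A) → itComm s (m - 1) = 0)
    (hZmul : ∀ a ∈ Z₀, ∀ b ∈ Z₀, a * b ∈ Z₀)
    (hZA : Z₀ ≤ A)
    (hZcent : ∀ z ∈ Z₀, ∀ r : R, z * r = r * z)
    (hZR : ∀ z ∈ Z₀, ∀ r : R, z * r ∈ A) :
    ∀ x ∈ spanPow (Z₀ : Set R) m, ∀ y ∈ Rn R m, x * y = 0 :=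
  central_subring_power_annihilates_general m hm A Z₀ hA hZcent hZR
end

section
/- Let R be an associative ring and let Z₀ be a subring of R with Z₀ ⊆ Z(R) (every element of Z₀ is central in R). Set J = Z₀ + Z₀R, a two-sided ideal of R. Then for every k ≥ 2 the additive subgroup generated by left-normed commutators of k elements of J equals Z₀^k · R^(−)_k, where Z₀^k is the additive span of k-fold products of elements of Z₀; in particular [J,J] = Z₀²·[R,R]. -/
section

variable {R : Type*} [Ring R]

theorem itComm_congr {s t : ℕ → R} {m : ℕ} (h : ∀ n ≤ m, s n = t n) :
    itComm s m = itComm t m := by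
  induction m with
  | zero => exact h 0 le_rfl
  | succ m ih =>
    rw [itComm, itComm, ih fun n hn => h n (by omega), h (m + 1) le_rfl]

theorem itComm_update_succ (t : ℕ → R) (m : ℕ) (b : R) :
    itComm (Function.update t (m + 1) b) (m + 1) = itComm t m * b - b * itComm t m := by
  rw [itComm, Function.update_self,
    itComm_congr fun n hn => Function.update_of_ne (by omega) b t]

theorem commutator_mem_closure {A B : Set R} {a b : R} (ha : a ∈ AddSubgroup.closure A)
    (hb : b ∈ AddSubgroup.closure B) :
    a * b - b * a ∈ AddSubgroup.closure {x | ∃ a ∈ A, ∃ b ∈ B, x = a * b - b * a} := by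
  set T := AddSubgroup.closure {x | ∃ a ∈ A, ∃ b ∈ B, x = a * b - b * a}
  have hA (b : R) (hb : b ∈ B) : AddSubgroup.closure A ≤ T.comap (.mulRight b - .mulLeft b) :=
    (AddSubgroup.closure_le _).2 fun a ha => AddSubgroup.subset_closure ⟨a, ha, b, hb, rfl⟩
  have hB : AddSubgroup.closure B ≤ T.comap (.mulLeft a - .mulRight a) :=
    (AddSubgroup.closure_le _).2 fun b hb => hA b hb ha
  exact hB hb

theorem itComm_mem_closure {S : Set R} {s : ℕ → R}
    (hs : ∀ n, s n ∈ AddSubgroup.closure S) (m : ℕ) :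
    itComm s m ∈ AddSubgroup.closure {x | ∃ t : ℕ → R, (∀ n, t n ∈ S) ∧ x = itComm t m} := by
  induction m with
  | zero =>
    refine AddSubgroup.closure_mono ?_ (hs 0)
    exact fun x hx => ⟨fun _ => x, fun _ => hx, rfl⟩
  | succ m ih =>
    refine AddSubgroup.closure_mono ?_ (commutator_mem_closure ih (hs (m + 1)))
    rintro _ ⟨_, ⟨t, ht, rfl⟩, b, hb, rfl⟩
    refine ⟨Function.update t (m + 1) b, fun n => ?_, (itComm_update_succ t m b).symm⟩
    rcases eq_or_ne n (m + 1) with rfl | hn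
    · simpa using hb
    · simpa [hn] using ht n

theorem commutator_mul_mul_of_mem_center {c w : R} (hc : c ∈ Submonoid.center R)
    (hw : w ∈ Submonoid.center R) (a b : R) :
    c * a * (w * b) - w * b * (c * a) = c * w * (a * b - b * a) := by
  rw [Submonoid.mem_center_iff] at hc hw
  have h₁ : c * a * (w * b) = c * w * (a * b) := by
    rw [mul_assoc c, ← mul_assoc a, hw a, mul_assoc w, ← mul_assoc]
  have h₂ : w * b * (c * a) = c * w * (b * a) := by
    rw [mul_assoc w, ← mul_assoc b, hc b, mul_assoc c, ← mul_assoc, ← hw c]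
  rw [h₁, h₂, mul_sub]

theorem itComm_mul_of_mem_center {z : ℕ → R} (hz : ∀ n, z n ∈ Submonoid.center R)
    (s : ℕ → R) (m : ℕ) :
    itComm (fun n => z n * s n) m = ((List.range (m + 1)).map z).prod * itComm s m := by
  induction m with
  | zero => simp [itComm]
  | succ m ih =>
    have hprod : ((List.range (m + 1)).map z).prod ∈ Submonoid.center R :=
      Submonoid.list_prod_mem _ (by simpa using fun n _ => hz n)
    rw [itComm, itComm, ih, List.prod_range_succ _ (m + 1),
      commutator_mul_mul_of_mem_center hprod (hz _)]

theorem closure_setOf_itComm_of_mem_closure (S : Set R) (m : ℕ) :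
    AddSubgroup.closure
        {x | ∃ s : ℕ → R, (∀ n, s n ∈ AddSubgroup.closure S) ∧ x = itComm s m} =
      AddSubgroup.closure {x | ∃ t : ℕ → R, (∀ n, t n ∈ S) ∧ x = itComm t m} := by
  apply le_antisymm
  · rw [AddSubgroup.closure_le]
    rintro _ ⟨s, hs, rfl⟩
    exact itComm_mem_closure hs m
  · refine AddSubgroup.closure_mono ?_
    rintro _ ⟨t, ht, rfl⟩
    exact ⟨t, fun n => AddSubgroup.subset_closure (ht n), rfl⟩

theorem setOf_itComm_central_mul_eq {Z : AddSubgroup R}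
    (hZ : ∀ z ∈ Z, z ∈ Submonoid.center R) (m : ℕ) :
    {x | ∃ t : ℕ → R, (∀ n, t n ∈ {y | ∃ z ∈ Z, ∃ r : R, y = z * r}) ∧
        x = itComm t m} =
      {x | ∃ l : List R, l.length = m + 1 ∧ (∀ a ∈ l, a ∈ Z) ∧
        ∃ s : ℕ → R, x = l.prod * itComm s m} := by
  ext x
  constructor
  · rintro ⟨t, ht, rfl⟩
    choose z hz r hr using ht
    refine ⟨(List.range (m + 1)).map z, by simp, by simpa using fun n _ => hz n, r, ?_⟩
    rw [← itComm_mul_of_mem_center (fun n => hZ _ (hz n)), ← funext hr]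
  · rintro ⟨l, hlen, hl, s, rfl⟩
    have hzl (n : ℕ) : l.getD n 0 ∈ Z := by
      rcases lt_or_ge n l.length with h | h
      · simpa [h] using hl _ (List.getElem_mem h)
      · simp [h]
    have hmap : (List.range l.length).map (fun n => l.getD n 0) = l :=
      List.ext_getElem (by simp) fun n _ h => by simp [h]
    refine ⟨fun n => l.getD n 0 * s n, fun n => ⟨_, hzl n, s n, rfl⟩, ?_⟩
    rw [itComm_mul_of_mem_center (fun n => hZ _ (hzl n)), ← hlen, hmap]

end

theorem comm_of_central_ideal_eq_general {R : Type*} [Ring R] (Z₀ : AddSubgroup R)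
    (hZcent : ∀ z ∈ Z₀, ∀ r : R, z * r = r * z)
    (J : AddSubgroup R)
    (hJ : J = Z₀ ⊔ AddSubgroup.closure {x | ∃ z ∈ Z₀, ∃ r : R, x = z * r})
    (k : ℕ) (hk : 2 ≤ k) :
    AddSubgroup.closure {x | ∃ s : ℕ → R, (∀ n, s n ∈ J) ∧ x = itComm s (k - 1)} =
      AddSubgroup.closure {x | ∃ l : List R, l.length = k ∧ (∀ a ∈ l, a ∈ Z₀) ∧
        ∃ s : ℕ → R, x = l.prod * itComm s (k - 1)} := by
  have hJ_eq : J = AddSubgroup.closure {x | ∃ z ∈ Z₀, ∃ r : R, x = z * r} :=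
    hJ.trans <| sup_eq_right.2 fun z hz =>
      AddSubgroup.subset_closure ⟨z, hz, 1, (mul_one z).symm⟩
  have hcent (z : R) (hz : z ∈ Z₀) : z ∈ Submonoid.center R :=
    Submonoid.mem_center_iff.2 fun r => (hZcent z hz r).symm
  obtain ⟨m, rfl⟩ : ∃ m, k = m + 1 := ⟨k - 1, by omega⟩
  rw [Nat.add_sub_cancel, hJ_eq, closure_setOf_itComm_of_mem_closure,
    setOf_itComm_central_mul_eq hcent]

/-- For a central subring `Z₀ ⊆ Z(R)` and the two-sided ideal
`J = Z₀ + Z₀R`, the additive span of left-normed commutators of `k ≥ 2` elements of `J`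
equals `Z₀^k · R^(−)_k`. -/
theorem comm_of_central_ideal_eq {R : Type*} [Ring R] (Z₀ : AddSubgroup R)
    (hZmul : ∀ a ∈ Z₀, ∀ b ∈ Z₀, a * b ∈ Z₀)
    (hZcent : ∀ z ∈ Z₀, ∀ r : R, z * r = r * z)
    (J : AddSubgroup R)
    (hJ : J = Z₀ ⊔ AddSubgroup.closure {x | ∃ z ∈ Z₀, ∃ r : R, x = z * r})
    (k : ℕ) (hk : 2 ≤ k) :
    AddSubgroup.closure {x | ∃ s : ℕ → R, (∀ n, s n ∈ J) ∧ x = itComm s (k - 1)} =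
      AddSubgroup.closure {x | ∃ l : List R, l.length = k ∧ (∀ a ∈ l, a ∈ Z₀) ∧
        ∃ s : ℕ → R, x = l.prod * itComm s (k - 1)} :=
  comm_of_central_ideal_eq_general Z₀ hZcent J hJ k hk
end

section
/- Let R be an associative ring and let I be a two-sided ideal of R. If J is a nilpotent two-sided ideal of the ring I (i.e. J^k = 0 for some k), then J is contained in a nilpotent two-sided ideal J_I of the ring R with J_I ⊆ I. -/
/-- **Lemma 3, part 1.** If `I` is a two-sided ideal of `R` and `J` is a
nilpotent two-sided ideal of the ring `I`, then `J` lies in a nilpotent two-sided ideal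
`J_I` of `R` with `J_I ⊆ I`. -/
theorem nilpotent_ideal_of_ideal {R : Type*} [Ring R] (I J : AddSubgroup R)
    (hI : IsIdealSG I) (hJI : J ≤ I)
    (hJl : ∀ j ∈ J, ∀ i ∈ I, i * j ∈ J) (hJr : ∀ j ∈ J, ∀ i ∈ I, j * i ∈ J)
    (hJnil : IsNilpotentSG J) :
    ∃ N : AddSubgroup R, IsIdealSG N ∧ IsNilpotentSG N ∧ J ≤ N ∧ N ≤ I := by
  obtain ⟨k, hk, hknil⟩ := hJnil
  set S : Set R := {x | ∃ j ∈ J, ∃ u v : R, x = u * j * v} with hS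
  set N : AddSubgroup R := AddSubgroup.closure S with hN
  have hJN : J ≤ N := fun j hj =>
    AddSubgroup.subset_closure ⟨j, hj, 1, 1, by simp⟩
  have hNI : N ≤ I := by
    rw [hN]
    refine (AddSubgroup.closure_le _).2 ?_
    rintro x ⟨j, hj, u, v, rfl⟩
    exact hI.2 _ (hI.1 _ (hJI hj) u) v
  have hNl : IsLeftIdealSG N := by
    intro x hx r
    refine AddSubgroup.closure_induction
      (p := fun y _ => r * y ∈ N) ?_ ?_ ?_ ?_ hx
    · rintro y ⟨j, hj, u, v, rfl⟩
      exact AddSubgroup.subset_closure ⟨j, hj, r * u, v, by noncomm_ring⟩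
    · show r * 0 ∈ N
      rw [mul_zero]; exact zero_mem N
    · intro a b _ _ ha hb
      show r * (a + b) ∈ N
      rw [mul_add]; exact add_mem ha hb
    · intro a _ ha
      show r * (-a) ∈ N
      rw [mul_neg]; exact neg_mem ha
  have hNr : IsRightIdealSG N := by
    intro x hx r
    refine AddSubgroup.closure_induction
      (p := fun y _ => y * r ∈ N) ?_ ?_ ?_ ?_ hx
    · rintro y ⟨j, hj, u, v, rfl⟩
      exact AddSubgroup.subset_closure ⟨j, hj, u, v * r, by noncomm_ring⟩
    · show (0 : R) * r ∈ N
      rw [zero_mul]; exact zero_mem N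
    · intro a b _ _ ha hb
      show (a + b) * r ∈ N
      rw [add_mul]; exact add_mem ha hb
    · intro a _ ha
      show (-a) * r ∈ N
      rw [neg_mul]; exact neg_mem ha
  have key : ∀ y ∈ N, ∀ x ∈ I, ∀ z ∈ I, x * y * z ∈ J := by
    intro y hy
    refine AddSubgroup.closure_induction
      (p := fun y _ => ∀ x ∈ I, ∀ z ∈ I, x * y * z ∈ J) ?_ ?_ ?_ ?_ hy
    · rintro y ⟨j, hj, u, v, rfl⟩ x hx z hz
      have h1 : x * u ∈ I := hI.2 _ hx u
      have h2 : (x * u) * j ∈ J := hJl _ hj _ h1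
      have h3 : v * z ∈ I := hI.1 _ hz v
      have h4 : ((x * u) * j) * (v * z) ∈ J := hJr _ h2 _ h3
      have : x * (u * j * v) * z = ((x * u) * j) * (v * z) := by
        simp [mul_assoc]
      rw [this]; exact h4
    · intro x _ z _; simpa using J.zero_mem
    · intro a b _ _ ha hb x hx z hz
      have : x * (a + b) * z = x * a * z + x * b * z := by noncomm_ring
      rw [this]; exact add_mem (ha x hx z hz) (hb x hx z hz)
    · intro a _ ha x hx z hz
      have : x * (-a) * z = -(x * a * z) := by noncomm_ring
      rw [this]; exact neg_mem (ha x hx z hz)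
  have chunk : ∀ n (l : List R), l.length = 3 * n → (∀ a ∈ l, a ∈ N) →
      ∃ e : List R, e.length = n ∧ (∀ a ∈ e, a ∈ J) ∧ l.prod = e.prod := by
    intro n
    induction n with
    | zero =>
      intro l hl _
      have : l = [] := List.length_eq_zero_iff.mp (by omega)
      exact ⟨[], rfl, by simp, by simp [this]⟩
    | succ n ih =>
      intro l hl hm
      obtain ⟨a, l1, rfl⟩ : ∃ a l1, l = a :: l1 := by
        cases l with
        | nil => simp at hl
        | cons a l1 => exact ⟨a, l1, rfl⟩
      obtain ⟨b, l2, rfl⟩ : ∃ b l2, l1 = b :: l2 := by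
        cases l1 with
        | nil => simp at hl; omega
        | cons b l2 => exact ⟨b, l2, rfl⟩
      obtain ⟨c, l3, rfl⟩ : ∃ c l3, l2 = c :: l3 := by
        cases l2 with
        | nil => simp at hl; omega
        | cons c l3 => exact ⟨c, l3, rfl⟩
      have hl3 : l3.length = 3 * n := by simp at hl; omega
      obtain ⟨e, he, heJ, hpe⟩ := ih l3 hl3 (fun x hx => hm x (by simp [hx]))
      refine ⟨(a * b * c) :: e, by simp [he], ?_, ?_⟩
      · intro x hx
        rcases List.mem_cons.mp hx with h | h
        · subst h
          exact key b (hm b (by simp)) a (hNI (hm a (by simp))) c (hNI (hm c (by simp)))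
        · exact heJ x h
      · simp [hpe, mul_assoc]
  refine ⟨N, ⟨hNl, hNr⟩, ⟨3 * k, by omega, ?_⟩, hJN, hNI⟩
  intro l hl hm
  obtain ⟨e, he, heJ, hpe⟩ := chunk k l hl hm
  rw [hpe]
  exact hknil e he heJ
end

section
/- Let R be a semiprime associative ring and let I be a Lie nilpotent one-sided (left or right) ideal of R. Then I·R₂ = 0, where R₂ = [R,R] + [R,R]·R is the two-sided ideal of R generated by all commutators [r₁,r₂]. -/
section StatementThirteenAux

variable {R : Type*} [Ring R]

private theorem sp_key' (hsp : IsSemiprimeRing R)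
    (a : R) (ha : ∀ r : R, a * r * a = 0) : a = 0 := by
  set S : Set R := {x | ∃ u v : R, x = u * a * v} with hS
  set J := AddSubgroup.closure S with hJ
  have haJ : a ∈ J := AddSubgroup.subset_closure ⟨1, 1, by simp⟩
  have hleft : IsLeftIdealSG J := by
    intro i hi r
    have : J ≤ AddSubgroup.comap (AddMonoidHom.mulLeft r) J := by
      rw [hJ, AddSubgroup.closure_le]
      rintro x ⟨u, v, rfl⟩
      simp only [SetLike.mem_coe, AddSubgroup.mem_comap, AddMonoidHom.coe_mulLeft]
      exact AddSubgroup.subset_closure ⟨r * u, v, by noncomm_ring⟩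
    exact this hi
  have hright : IsRightIdealSG J := by
    intro i hi r
    have : J ≤ AddSubgroup.comap (AddMonoidHom.mulRight r) J := by
      rw [hJ, AddSubgroup.closure_le]
      rintro x ⟨u, v, rfl⟩
      simp only [SetLike.mem_coe, AddSubgroup.mem_comap, AddMonoidHom.coe_mulRight]
      exact AddSubgroup.subset_closure ⟨u, v * r, by noncomm_ring⟩
    exact this hi
  have hmul0 : ∀ x ∈ J, ∀ y ∈ J, x * y = 0 := by
    have hgen : ∀ x ∈ S, ∀ y ∈ J, x * y = 0 := by
      rintro x ⟨u, v, rfl⟩ y hy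
      have : J ≤ AddSubgroup.comap (AddMonoidHom.mulLeft (u * a * v)) ⊥ := by
        rw [hJ, AddSubgroup.closure_le]
        rintro z ⟨u', v', rfl⟩
        have h0 : a * (v * u') * a = 0 := ha (v * u')
        have he : (u * a * v) * (u' * a * v') = u * (a * (v * u') * a) * v' := by
          noncomm_ring
        simp only [Set.mem_preimage, SetLike.mem_coe, AddSubgroup.mem_comap,
          AddMonoidHom.coe_mulLeft, AddSubgroup.mem_bot]
        rw [he, h0]; simp
      have := this hy
      simpa using this
    intro x hx y hy
    have : J ≤ AddSubgroup.comap (AddMonoidHom.mulRight y) ⊥ := by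
      rw [hJ, AddSubgroup.closure_le]
      intro z hz
      simp only [Set.mem_preimage, SetLike.mem_coe, AddSubgroup.mem_comap,
        AddMonoidHom.coe_mulRight, AddSubgroup.mem_bot]
      exact hgen z hz y hy
    simpa using this hx
  have hbot : J = ⊥ := by
    refine hsp J ⟨hleft, hright⟩ ⟨2, by norm_num, ?_⟩
    intro l hl hmem
    match l, hl with
    | [x, y], _ =>
      have := hmul0 x (hmem x (by simp)) y (hmem y (by simp))
      simp [this]
  have := hbot ▸ haJ
  simpa using this

/-- Lemma A: an element of a one-sided ideal commuting with the ideal is central. -/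
private theorem lemA (hP : ∀ a : R, (∀ r : R, a * r * a = 0) → a = 0)
    (I : AddSubgroup R) (hI : IsLeftIdealSG I ∨ IsRightIdealSG I)
    (a : R) (ha : a ∈ I) (hc : ∀ i ∈ I, a * i = i * a) :
    ∀ r : R, a * r = r * a := by
  rcases hI with hL | hR
  · have h1 : ∀ r : R, (a * r - r * a) * a = 0 := by
      intro r
      have h := hc (r * a) (hL a ha r)
      calc (a * r - r * a) * a = a * (r * a) - (r * a) * a := by noncomm_ring
        _ = 0 := by rw [h]; simp
    have h2 : ∀ s r : R, (a * s - s * a) * (r * a) = 0 := by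
      intro s r
      calc (a * s - s * a) * (r * a)
          = (a * (s * r) - (s * r) * a) * a - s * ((a * r - r * a) * a) := by noncomm_ring
        _ = 0 := by rw [h1, h1]; simp
    intro s
    have h3 : ∀ r : R, (a * s - s * a) * r * (a * s - s * a) = 0 := by
      intro r
      calc (a * s - s * a) * r * (a * s - s * a)
          = ((a * s - s * a) * (r * a)) * s - (a * s - s * a) * ((r * s) * a) := by
            noncomm_ring
        _ = 0 := by rw [h2, h2]; simp
    have := hP _ h3
    linear_combination (norm := noncomm_ring) this
  · have h1 : ∀ r : R, a * (a * r - r * a) = 0 := by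
      intro r
      have h := hc (a * r) (hR a ha r)
      calc a * (a * r - r * a) = a * (a * r) - (a * r) * a := by noncomm_ring
        _ = 0 := by rw [h]; simp
    have h2 : ∀ r s : R, a * r * (a * s - s * a) = 0 := by
      intro r s
      calc a * r * (a * s - s * a)
          = a * (a * (r * s) - (r * s) * a) - (a * (a * r - r * a)) * s := by noncomm_ring
        _ = 0 := by rw [h1, h1]; simp
    intro s
    have h3 : ∀ r : R, (a * s - s * a) * r * (a * s - s * a) = 0 := by
      intro r
      calc (a * s - s * a) * r * (a * s - s * a)
          = a * (s * r) * (a * s - s * a) - s * (a * r * (a * s - s * a)) := by noncomm_ring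
        _ = 0 := by rw [h2, h2]; simp
    have := hP _ h3
    linear_combination (norm := noncomm_ring) this

/-- Lemma A′: an element of a one-sided ideal whose commutators with the ideal are
central is itself central. -/
private theorem lemA' (hP : ∀ a : R, (∀ r : R, a * r * a = 0) → a = 0)
    (I : AddSubgroup R) (hI : IsLeftIdealSG I ∨ IsRightIdealSG I)
    (a : R) (ha : a ∈ I)
    (hZ : ∀ i ∈ I, ∀ u : R, (a * i - i * a) * u = u * (a * i - i * a)) :
    ∀ r : R, a * r = r * a := by
  have hmulI : ∀ b ∈ I, ∀ c ∈ I, b * c ∈ I := by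
    rcases hI with hL | hR
    · intro b hb c hc; exact hL c hc b
    · intro b hb c hc; exact hR b hb c
  have hcenI : ∀ x ∈ I, (∀ u : R, x * u = u * x) → ∀ r : R, x * r ∈ I := by
    rcases hI with hL | hR
    · intro x hx hxc r; rw [hxc r]; exact hL x hx r
    · intro x hx _ r; exact hR x hx r
  have hcomm : ∀ i ∈ I, a * i = i * a := by
    intro i hi
    set x := a * i - i * a with hx
    have hxI : x ∈ I := sub_mem (hmulI a ha i hi) (hmulI i hi a ha)
    have hxc : ∀ u : R, x * u = u * x := hZ i hi
    have hα : ∀ r u : R, (x * (a * r - r * a)) * u = u * (x * (a * r - r * a)) := by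
      intro r u
      have hxrI : x * r ∈ I := hcenI x hxI hxc r
      have h := hZ (x * r) hxrI u
      have e : a * (x * r) - (x * r) * a = x * (a * r - r * a) := by
        have hax := hxc a
        calc a * (x * r) - (x * r) * a = (a * x) * r - x * (r * a) := by noncomm_ring
          _ = (x * a) * r - x * (r * a) := by rw [← hax]
          _ = x * (a * r - r * a) := by noncomm_ring
      rw [e] at h; exact h
    have hkey : ∀ r t : R,
        (x * (a * r - r * a)) * (a * t - t * a) = 0 := by
      intro r t
      have e1 := hα (r * a) t
      have e2 := hα r t
      have iden : (x * (a * r - r * a)) * (a * t - t * a)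
          = ((x * (a * (r * a) - (r * a) * a)) * t - t * (x * (a * (r * a) - (r * a) * a)))
            + (t * (x * (a * r - r * a)) - (x * (a * r - r * a)) * t) * a := by
        noncomm_ring
      rw [iden, e1, e2]; simp
    have hx3 : x * x * x = 0 := by
      calc x * x * x = (x * (a * i - i * a)) * (a * i - i * a) := by rw [← hx]
        _ = 0 := hkey i i
    have hx2 : x * x = 0 := by
      refine hP (x * x) ?_
      intro r
      have e : x * x * r = r * (x * x) := by
        rw [mul_assoc, hxc r, ← mul_assoc, hxc r, mul_assoc]
      calc (x * x) * r * (x * x) = r * (x * x) * (x * x) := by rw [e]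
        _ = r * ((x * x * x) * x) := by noncomm_ring
        _ = 0 := by rw [hx3]; simp
    have hx0 : x = 0 := by
      refine hP x ?_
      intro r
      calc x * r * x = r * (x * x) := by rw [hxc r, mul_assoc]
        _ = 0 := by rw [hx2]; simp
    exact sub_eq_zero.mp hx0
  exact lemA hP I hI a ha hcomm

private theorem itComm_congr_s13 (s s' : ℕ → R) : ∀ k, (∀ n ≤ k, s n = s' n) →
    itComm s k = itComm s' k := by
  intro k
  induction k with
  | zero => intro h; exact h 0 le_rfl
  | succ k ih =>
    intro h
    show itComm s k * s (k+1) - s (k+1) * itComm s k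
      = itComm s' k * s' (k+1) - s' (k+1) * itComm s' k
    rw [ih (fun n hn => h n (le_trans hn (Nat.le_succ k))), h (k+1) le_rfl]

private theorem itComm_mem (I : AddSubgroup R) (hmul : ∀ b ∈ I, ∀ c ∈ I, b * c ∈ I)
    (s : ℕ → R) (hs : ∀ n, s n ∈ I) : ∀ k, itComm s k ∈ I := by
  intro k
  induction k with
  | zero => exact hs 0
  | succ k ih =>
    exact sub_mem (hmul _ ih _ (hs (k+1))) (hmul _ (hs (k+1)) _ ih)

/-- Downward induction: if all `(m+1)`-fold commutators of `I` are central,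
then `I` is central. -/
private theorem central_aux (hP : ∀ a : R, (∀ r : R, a * r * a = 0) → a = 0)
    (I : AddSubgroup R) (hI : IsLeftIdealSG I ∨ IsRightIdealSG I) :
    ∀ m : ℕ, (∀ s : ℕ → R, (∀ n, s n ∈ I) →
        ∀ u : R, itComm s m * u = u * itComm s m) →
      ∀ i ∈ I, ∀ r : R, i * r = r * i := by
  have hmul : ∀ b ∈ I, ∀ c ∈ I, b * c ∈ I := by
    rcases hI with hL | hR
    · intro b hb c hc; exact hL c hc b
    · intro b hb c hc; exact hR b hb c
  intro m
  induction m with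
  | zero =>
    intro h i hi r
    exact h (fun _ => i) (fun _ => hi) r
  | succ m ih =>
    intro h
    apply ih
    intro s hs u
    have haI : itComm s m ∈ I := itComm_mem I hmul s hs m
    refine lemA' hP I hI _ haI ?_ u
    intro i hi v
    have hs' : ∀ n, (Function.update s (m+1) i) n ∈ I := by
      intro n
      rcases eq_or_ne n (m+1) with rfl | hn
      · rw [Function.update_self]; exact hi
      · rw [Function.update_of_ne hn]; exact hs n
    have he : itComm (Function.update s (m+1) i) (m+1)
        = itComm s m * i - i * itComm s m := by
      show itComm (Function.update s (m+1) i) m * (Function.update s (m+1) i) (m+1)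
          - (Function.update s (m+1) i) (m+1) * itComm (Function.update s (m+1) i) m = _
      rw [Function.update_self,
        itComm_congr_s13 _ s m (fun n hn => Function.update_of_ne (by omega) _ _)]
    rw [← he]
    exact h _ hs' v

end StatementThirteenAux

/-- In a semiprime ring, a Lie nilpotent one-sided ideal `I` satisfies
`I · R₂ = 0`, where `R₂ = [R,R] + [R,R]·R`. -/
theorem semiprime_lie_nilpotent_ideal_annihilates_R2 {R : Type*} [Ring R]
    (hsp : IsSemiprimeRing R)
    (I : AddSubgroup R) (hI : IsLeftIdealSG I ∨ IsRightIdealSG I)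
    (hnil : ∃ m, LieNilpotentClassLe (I : Set R) m) :
    ∀ i ∈ I, ∀ x ∈ Rn R 2, i * x = 0 := by
  have hP : ∀ a : R, (∀ r : R, a * r * a = 0) → a = 0 := fun a ha => sp_key' hsp a ha
  obtain ⟨m, hm⟩ := hnil
  have hcen : ∀ i ∈ I, ∀ r : R, i * r = r * i := by
    apply central_aux hP I hI m
    intro s hs u
    rw [hm s hs]
    simp
  have hIr : ∀ j ∈ I, ∀ t : R, j * t ∈ I := by
    rcases hI with hL | hR
    · intro j hj t
      rw [hcen j hj t]
      exact hL j hj t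
    · intro j hj t; exact hR j hj t
  intro i hi x hx
  have hgen1 : ∀ r t : R, i * (r * t - t * r) = 0 := by
    intro r t
    have h1 : i * r = r * i := hcen i hi r
    have h2 : (i * t) * r = r * (i * t) := hcen (i * t) (hIr i hi t) r
    calc i * (r * t - t * r) = (i * r) * t - ((i * t) * r) := by noncomm_ring
      _ = (r * i) * t - r * (i * t) := by rw [h1, h2]
      _ = 0 := by noncomm_ring
  have hlcs : ∀ c ∈ lcs R 2, i * c = 0 := by
    have hle : lcs R 2 ≤ AddSubgroup.comap (AddMonoidHom.mulLeft i) ⊥ := by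
      rw [lcs, AddSubgroup.closure_le]
      rintro z ⟨s, rfl⟩
      simp only [Set.mem_preimage, SetLike.mem_coe, AddSubgroup.mem_comap,
        AddMonoidHom.coe_mulLeft, AddSubgroup.mem_bot]
      exact hgen1 (s 0) (s 1)
    intro c hc
    simpa using hle hc
  have hR2 : Rn R 2 ≤ AddSubgroup.comap (AddMonoidHom.mulLeft i) ⊥ := by
    rw [Rn]
    apply sup_le
    · intro c hc
      simp only [AddSubgroup.mem_comap, AddMonoidHom.coe_mulLeft, AddSubgroup.mem_bot]
      exact hlcs c hc
    · rw [AddSubgroup.closure_le]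
      rintro z ⟨c, hc, r, rfl⟩
      simp only [Set.mem_preimage, SetLike.mem_coe, AddSubgroup.mem_comap,
        AddMonoidHom.coe_mulLeft, AddSubgroup.mem_bot]
      rw [← mul_assoc, hlcs c hc, zero_mul]
  simpa using hR2 hx
end

section
/- Let K be a field of characteristic ≠ 2 and let R = M₂(K). Then the set I of matrices whose second row is zero, I = {(x y; 0 0) : x, y ∈ K}, is a right ideal of R that is Lie solvable (of derived length 2) as a subring, but I is not contained in any Lie solvable two-sided ideal of R. -/
/-- The set of `2 × 2` matrices over `K` with zero second row, as an additive subgroup. -/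
def rowOne (K : Type*) [Field K] : AddSubgroup (Matrix (Fin 2) (Fin 2) K) where
  carrier := {M | M 1 0 = 0 ∧ M 1 1 = 0}
  add_mem' := by
    intro a b ha hb
    simp_all [Matrix.add_apply]
  zero_mem' := by simp
  neg_mem' := by
    intro a ha
    simp_all [Matrix.neg_apply]


section AuxLemmas

variable {K : Type*} [Field K]

local notation "M2" => Matrix (Fin 2) (Fin 2) K

private def eM (c : K) : M2 := !![0,c;0,0]
private def fM (c : K) : M2 := !![0,0;c,0]
private def hM (c : K) : M2 := !![c,0;0,-c]

private lemma comm_ef (a b : K) : hM (a*b) = eM a * fM b - fM b * eM a := by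
  ext i j
  fin_cases i <;> fin_cases j <;>
    simp [eM, fM, hM, Matrix.mul_apply, Fin.sum_univ_two] <;> ring

private lemma comm_he (a b : K) : eM (2*a*b) = hM a * eM b - eM b * hM a := by
  ext i j
  fin_cases i <;> fin_cases j <;>
    simp [eM, fM, hM, Matrix.mul_apply, Fin.sum_univ_two] <;> ring

private lemma comm_fh (a b : K) : fM (2*a*b) = fM a * hM b - hM b * fM a := by
  ext i j
  fin_cases i <;> fin_cases j <;>
    simp [eM, fM, hM, Matrix.mul_apply, Fin.sum_univ_two] <;> ring

private lemma derSeries_succ {R : Type*} [Ring R] (S : AddSubgroup R) (n : ℕ) :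
    derSeries S (n+1) = AddSubgroup.closure
      {x | ∃ a ∈ derSeries S n, ∃ b ∈ derSeries S n, x = a * b - b * a} := rfl

private lemma efh_mem (h2 : (2:K) ≠ 0) :
    ∀ n : ℕ, ∀ c : K, eM c ∈ derSeries (⊤ : AddSubgroup M2) n ∧
      fM c ∈ derSeries (⊤ : AddSubgroup M2) n ∧ hM c ∈ derSeries (⊤ : AddSubgroup M2) n := by
  intro n
  induction n with
  | zero => intro c; exact ⟨trivial, trivial, trivial⟩
  | succ n ih =>
    intro c
    rw [derSeries_succ]
    refine ⟨?_, ?_, ?_⟩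
    · apply AddSubgroup.subset_closure
      refine ⟨hM (c/2), (ih (c/2)).2.2, eM 1, (ih 1).1, ?_⟩
      have := comm_he (c/2) 1
      rwa [show 2*(c/2)*1 = c by field_simp] at this
    · apply AddSubgroup.subset_closure
      refine ⟨fM 1, (ih 1).2.1, hM (c/2), (ih (c/2)).2.2, ?_⟩
      have := comm_fh 1 (c/2)
      rwa [show 2*1*(c/2) = c by field_simp] at this
    · apply AddSubgroup.subset_closure
      refine ⟨eM c, (ih c).1, fM 1, (ih 1).2.1, ?_⟩
      have := comm_ef c 1
      rwa [mul_one] at this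

private lemma top_not_solvable (h2 : (2:K) ≠ 0) (s : ℕ) :
    derSeries (⊤ : AddSubgroup M2) s ≠ ⊥ := by
  intro hbot
  have hmem := (efh_mem h2 s 1).1
  rw [hbot, AddSubgroup.mem_bot] at hmem
  have : (eM (1:K)) 0 1 = 0 := by rw [hmem]; simp
  simp [eM] at this

private lemma mem_rowOne {M : M2} : M ∈ rowOne K ↔ M 1 0 = 0 ∧ M 1 1 = 0 := Iff.rfl

private lemma ideal_eq_top (J : AddSubgroup M2) (hJ : IsIdealSG J) (hle : rowOne K ≤ J) :
    J = ⊤ := by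
  have hE00 : (!![1,0;0,0] : M2) ∈ J := hle (by rw [mem_rowOne]; constructor <;> simp)
  have hE11 : (!![0,0;0,1] : M2) ∈ J := by
    have h1 : fM (1:K) * !![1,0;0,0] ∈ J := hJ.1 _ hE00 _
    have h2 : (fM (1:K) * !![1,0;0,0]) * eM 1 ∈ J := hJ.2 _ h1 _
    have : (fM (1:K) * !![1,0;0,0]) * eM 1 = !![0,0;0,1] := by
      ext i j
      fin_cases i <;> fin_cases j <;>
        simp [eM, fM, Matrix.mul_apply, Fin.sum_univ_two]
    rwa [this] at h2
  have hone : (1 : M2) ∈ J := by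
    have : (1 : M2) = !![1,0;0,0] + !![0,0;0,1] := by
      ext i j
      fin_cases i <;> fin_cases j <;> simp [Matrix.one_apply]
    rw [this]; exact J.add_mem hE00 hE11
  rw [AddSubgroup.eq_top_iff']
  intro M
  have := hJ.1 _ hone M
  rwa [mul_one] at this

private lemma d1_le (x : M2) (hx : x ∈ derSeries (rowOne K) 1) :
    x 0 0 = 0 ∧ x 1 0 = 0 ∧ x 1 1 = 0 := by
  let N : AddSubgroup M2 :=
    { carrier := {M | M 0 0 = 0 ∧ M 1 0 = 0 ∧ M 1 1 = 0}
      add_mem' := by intro a b ha hb; simp_all [Matrix.add_apply]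
      zero_mem' := by simp
      neg_mem' := by intro a ha; simp_all [Matrix.neg_apply] }
  have hle : derSeries (rowOne K) 1 ≤ N := by
    rw [derSeries_succ, AddSubgroup.closure_le]
    rintro y ⟨a, ha, b, hb, rfl⟩
    have ha' : a 1 0 = 0 ∧ a 1 1 = 0 := ha
    have hb' : b 1 0 = 0 ∧ b 1 1 = 0 := hb
    refine ⟨?_, ?_, ?_⟩ <;>
      simp [Matrix.sub_apply, Matrix.mul_apply, Fin.sum_univ_two,
        ha'.1, ha'.2, hb'.1, hb'.2] <;> ring
  exact hle hx

private lemma d2_bot : derSeries (rowOne K) 2 = ⊥ := by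
  rw [eq_bot_iff, derSeries_succ, AddSubgroup.closure_le]
  rintro y ⟨a, ha, b, hb, rfl⟩
  obtain ⟨ha1, ha2, ha3⟩ := d1_le a ha
  obtain ⟨hb1, hb2, hb3⟩ := d1_le b hb
  have : a * b - b * a = 0 := by
    ext i j
    fin_cases i <;> fin_cases j <;>
      simp [Matrix.sub_apply, Matrix.mul_apply, Fin.sum_univ_two,
        ha1, ha2, ha3, hb1, hb2, hb3]
  simp [this]

private lemma d1_ne_bot : derSeries (rowOne K) 1 ≠ ⊥ := by
  intro hbot
  have hmem : eM (1:K) ∈ derSeries (rowOne K) 1 := by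
    rw [derSeries_succ]
    apply AddSubgroup.subset_closure
    refine ⟨!![1,0;0,0], ?_, eM 1, ?_, ?_⟩
    · show !![1,0;0,0] ∈ rowOne K
      rw [mem_rowOne]; constructor <;> simp
    · show eM 1 ∈ rowOne K
      rw [mem_rowOne]; constructor <;> simp [eM]
    · ext i j
      fin_cases i <;> fin_cases j <;>
        simp [eM, Matrix.sub_apply, Matrix.mul_apply, Fin.sum_univ_two]
  rw [hbot, AddSubgroup.mem_bot] at hmem
  have : (eM (1:K)) 0 1 = 0 := by rw [hmem]; simp
  simp [eM] at this

end AuxLemmas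

/-- **Remark.** Over a field `K` of characteristic `≠ 2`, the set `I` of
matrices with zero second row is a right ideal of `M₂(K)` which is Lie solvable of derived
length `2` but is not contained in any Lie solvable two-sided ideal of `M₂(K)`. -/
theorem rowOne_not_in_lie_solvable_ideal (K : Type*) [Field K] (hchar : ringChar K ≠ 2) :
    IsRightIdealSG (rowOne K) ∧
    derSeries (rowOne K) 2 = ⊥ ∧ derSeries (rowOne K) 1 ≠ ⊥ ∧
    ¬ ∃ J : AddSubgroup (Matrix (Fin 2) (Fin 2) K),
        IsIdealSG J ∧ rowOne K ≤ J ∧ ∃ s : ℕ, derSeries J s = ⊥ := by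
  have h2 : (2:K) ≠ 0 := fun h => hchar (CharP.ringChar_of_prime_eq_zero Nat.prime_two h)
  refine ⟨?_, d2_bot, d1_ne_bot, ?_⟩
  · intro i hi r
    rw [mem_rowOne] at hi ⊢
    constructor <;> simp [Matrix.mul_apply, Fin.sum_univ_two, hi.1, hi.2]
  · rintro ⟨J, hJ, hle, s, hs⟩
    rw [ideal_eq_top J hJ hle] at hs
    exact top_not_solvable h2 s hs
end

section
/- Let K be a field. Then the simple ring M₂(K) is the sum of two Lie solvable right ideals: M₂(K) = I + J, where I = {(x y; 0 0) : x, y ∈ K} is the set of matrices with zero second row and J = {(0 0; z t) : z, t ∈ K} is the set of matrices with zero first row; both I and J are right ideals of M₂(K) that are Lie solvable as subrings. -/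
/-- The set of `2 × 2` matrices over `K` with zero first row, as an additive subgroup. -/
def rowTwo (K : Type*) [Field K] : AddSubgroup (Matrix (Fin 2) (Fin 2) K) where
  carrier := {M | M 0 0 = 0 ∧ M 0 1 = 0}
  add_mem' := by
    intro a b ha hb
    simp_all [Matrix.add_apply]
  zero_mem' := by simp
  neg_mem' := by
    intro a ha
    simp_all [Matrix.neg_apply]

/-- Strictly upper triangular matrices. -/
def upperU (K : Type*) [Field K] : AddSubgroup (Matrix (Fin 2) (Fin 2) K) where
  carrier := {M | M 0 0 = 0 ∧ M 1 0 = 0 ∧ M 1 1 = 0}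
  add_mem' := by intro a b ha hb; simp_all [Matrix.add_apply]
  zero_mem' := by simp
  neg_mem' := by intro a ha; simp_all [Matrix.neg_apply]

/-- Strictly lower triangular matrices. -/
def lowerL (K : Type*) [Field K] : AddSubgroup (Matrix (Fin 2) (Fin 2) K) where
  carrier := {M | M 0 0 = 0 ∧ M 0 1 = 0 ∧ M 1 1 = 0}
  add_mem' := by intro a b ha hb; simp_all [Matrix.add_apply]
  zero_mem' := by simp
  neg_mem' := by intro a ha; simp_all [Matrix.neg_apply]

lemma derSeries_rowOne_two (K : Type*) [Field K] : derSeries (rowOne K) 2 = ⊥ := by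
  have h1 : derSeries (rowOne K) 1 ≤ upperU K := by
    apply (AddSubgroup.closure_le _).mpr
    rintro x ⟨a, ha, b, hb, rfl⟩
    obtain ⟨ha1, ha2⟩ := ha
    obtain ⟨hb1, hb2⟩ := hb
    refine ⟨?_, ?_, ?_⟩ <;>
      simp [Matrix.sub_apply, Matrix.mul_apply, Fin.sum_univ_two, ha1, ha2, hb1, hb2, mul_comm]
  apply le_bot_iff.mp
  apply (AddSubgroup.closure_le _).mpr
  rintro x ⟨a, ha, b, hb, rfl⟩
  obtain ⟨ha1, ha2, ha3⟩ := h1 ha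
  obtain ⟨hb1, hb2, hb3⟩ := h1 hb
  have hab : a * b = 0 := by
    ext i j
    fin_cases i <;> fin_cases j <;>
      simp [Matrix.mul_apply, Fin.sum_univ_two, ha1, ha2, ha3, hb1, hb2, hb3]
  have hba : b * a = 0 := by
    ext i j
    fin_cases i <;> fin_cases j <;>
      simp [Matrix.mul_apply, Fin.sum_univ_two, ha1, ha2, ha3, hb1, hb2, hb3]
  simp [hab, hba]

lemma derSeries_rowTwo_two (K : Type*) [Field K] : derSeries (rowTwo K) 2 = ⊥ := by
  have h1 : derSeries (rowTwo K) 1 ≤ lowerL K := by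
    apply (AddSubgroup.closure_le _).mpr
    rintro x ⟨a, ha, b, hb, rfl⟩
    obtain ⟨ha1, ha2⟩ := ha
    obtain ⟨hb1, hb2⟩ := hb
    refine ⟨?_, ?_, ?_⟩ <;>
      simp [Matrix.sub_apply, Matrix.mul_apply, Fin.sum_univ_two, ha1, ha2, hb1, hb2, mul_comm]
  apply le_bot_iff.mp
  apply (AddSubgroup.closure_le _).mpr
  rintro x ⟨a, ha, b, hb, rfl⟩
  obtain ⟨ha1, ha2, ha3⟩ := h1 ha
  obtain ⟨hb1, hb2, hb3⟩ := h1 hb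
  have hab : a * b = 0 := by
    ext i j
    fin_cases i <;> fin_cases j <;>
      simp [Matrix.mul_apply, Fin.sum_univ_two, ha1, ha2, ha3, hb1, hb2, hb3]
  have hba : b * a = 0 := by
    ext i j
    fin_cases i <;> fin_cases j <;>
      simp [Matrix.mul_apply, Fin.sum_univ_two, ha1, ha2, ha3, hb1, hb2, hb3]
  simp [hab, hba]

/-- **Remark.** For any field `K`, the simple ring `M₂(K)` is the sum of the
two Lie solvable right ideals of matrices with zero second row and zero first row. -/
theorem matrix_ring_sum_of_lie_solvable_right_ideals (K : Type*) [Field K] :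
    IsRightIdealSG (rowOne K) ∧ IsRightIdealSG (rowTwo K) ∧
    (∃ s : ℕ, derSeries (rowOne K) s = ⊥) ∧ (∃ s : ℕ, derSeries (rowTwo K) s = ⊥) ∧
    rowOne K ⊔ rowTwo K = ⊤ := by
  refine ⟨?_, ?_, ⟨2, derSeries_rowOne_two K⟩, ⟨2, derSeries_rowTwo_two K⟩, ?_⟩
  · rintro i ⟨h1, h2⟩ r
    exact ⟨by simp [Matrix.mul_apply, Fin.sum_univ_two, h1, h2],
           by simp [Matrix.mul_apply, Fin.sum_univ_two, h1, h2]⟩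
  · rintro i ⟨h1, h2⟩ r
    exact ⟨by simp [Matrix.mul_apply, Fin.sum_univ_two, h1, h2],
           by simp [Matrix.mul_apply, Fin.sum_univ_two, h1, h2]⟩
  · rw [eq_top_iff]
    intro M _
    rw [AddSubgroup.mem_sup]
    refine ⟨Matrix.of ![![M 0 0, M 0 1], ![0, 0]], ⟨rfl, rfl⟩,
            Matrix.of ![![0, 0], ![M 1 0, M 1 1]], ⟨rfl, rfl⟩, ?_⟩
    ext i j
    fin_cases i <;> fin_cases j <;> simp [Matrix.add_apply]
end
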